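/- For every M > 0 and every d ≥ 3 and 1 ≤ b ≤ d-2, there exists a finite b-balanced set X of unit vectors in R^d with u*(X) ≥ √M. Consequently u**(d, b) = ∞ for d ≥ 3 and 1 ≤ b ≤ d-2. -/

import Mathlib

/-!
Take the cross-polytope `±e_j` (`j < b`) and four unit vectors `A, B, A', B'` in the span of
`e_x = e_0` and two further axes `e_y, e_z`, all strictly on the positive side of the hyperplane
`z = q y`. That hyperplane cuts out the `b`-dimensional cross-polytope as a face through `0`, and
every face through `0` contains each `±e_j`, so the set is `b`-balanced. From `u = (0, 0, z)` the
farthest-point rule picks `A, B, A', B'` in turn as long as `ε z` is small, which restores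
`x = y = 0` and raises `z` by `ε + q + h > 0`; hence `u` climbs above any prescribed height, after
which it oscillates forever between `u` and `u + e_x`.
-/

open scoped RealInnerProductSpace

/-- A finite set `X` of unit vectors of `ℝ^d` is `b`-balanced if the origin belongs to a face
(extreme subset) of `conv X` of dimension `b`, but to no face of smaller dimension. -/
def IsBBalanced (d b : ℕ) (X : Finset (EuclideanSpace ℝ (Fin d))) : Prop :=
  (∃ F : Set (EuclideanSpace ℝ (Fin d)),
      IsExtreme ℝ (convexHull ℝ (X : Set (EuclideanSpace ℝ (Fin d)))) F ∧
      (0 : EuclideanSpace ℝ (Fin d)) ∈ F ∧ Module.finrank ℝ (vectorSpan ℝ F) = b) ∧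
  (∀ F : Set (EuclideanSpace ℝ (Fin d)),
      IsExtreme ℝ (convexHull ℝ (X : Set (EuclideanSpace ℝ (Fin d)))) F →
      (0 : EuclideanSpace ℝ (Fin d)) ∈ F → b ≤ Module.finrank ℝ (vectorSpan ℝ F))

open Set Submodule Relation

section Faces

variable {E : Type*} [AddCommGroup E] [Module ℝ E]

theorem vectorSpan_eq_span_of_zero_mem {s : Set E} (h : (0 : E) ∈ s) :
    vectorSpan ℝ s = span ℝ s := by
  simp [vectorSpan_eq_span_vsub_set_right ℝ h]

theorem zero_mem_openSegment_neg (v : E) : (0 : E) ∈ openSegment ℝ v (-v) :=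
  ⟨1 / 2, 1 / 2, by norm_num, by norm_num, by norm_num, by rw [smul_neg, add_neg_cancel]⟩

theorem isExtreme_inter_ker {A : Set E} {f : E →ₗ[ℝ] ℝ} (hf : ∀ x ∈ A, 0 ≤ f x) :
    IsExtreme ℝ A (A ∩ LinearMap.ker f) := by
  refine ⟨inter_subset_left, fun x₁ hx₁ x₂ hx₂ x hx ⟨a, b, ha, hb, _, hab⟩ => ⟨hx₁, ?_⟩⟩
  have hsum : a * f x₁ + b * f x₂ = 0 := by
    simpa [← hab] using LinearMap.mem_ker.1 hx.2
  have h₁ := ((add_eq_zero_iff_of_nonneg (mul_nonneg ha.le (hf x₁ hx₁))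
    (mul_nonneg hb.le (hf x₂ hx₂))).1 hsum).1
  exact (mul_eq_zero.1 h₁).resolve_left ha.ne'

theorem convexHull_inter_ker_subset {s : Finset E} {f : E →ₗ[ℝ] ℝ} {W : Submodule ℝ E}
    (hf : ∀ x ∈ s, 0 ≤ f x) (hW : ∀ x ∈ s, f x = 0 → x ∈ W) :
    convexHull ℝ ↑s ∩ LinearMap.ker f ⊆ (W : Set E) := by
  rintro _ ⟨hx, hfx⟩
  obtain ⟨w, hw₀, hw₁, rfl⟩ := Finset.mem_convexHull.1 hx
  rw [Finset.centerMass_eq_of_sum_1 _ _ hw₁] at hfx ⊢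
  have hterms : ∀ y ∈ s, w y * f y = 0 := by
    refine (Finset.sum_eq_zero_iff_of_nonneg fun y hy => mul_nonneg (hw₀ y hy) (hf y hy)).1 ?_
    simpa using LinearMap.mem_ker.1 hfx
  refine W.sum_mem fun y hy => ?_
  rcases mul_eq_zero.1 (hterms y hy) with h | h
  · simp [h]
  · exact W.smul_mem _ (hW y hy h)

theorem IsExtreme.mem_of_zero_mem {A F : Set E} (hF : IsExtreme ℝ A F) (h0 : (0 : E) ∈ F)
    {v : E} (hv : v ∈ A) (hv' : -v ∈ A) : v ∈ F :=
  hF.2 hv hv' h0 (zero_mem_openSegment_neg v)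

theorem IsExtreme.span_le_vectorSpan {ι : Type*} {A F : Set E} (hF : IsExtreme ℝ A F)
    (h0 : (0 : E) ∈ F) {e : ι → E} (he : ∀ i, e i ∈ A ∧ -e i ∈ A) :
    span ℝ (range e) ≤ vectorSpan ℝ F := by
  rw [vectorSpan_eq_span_of_zero_mem h0]
  exact span_mono (range_subset_iff.2 fun i => hF.mem_of_zero_mem h0 (he i).1 (he i).2)

end Faces

theorem isBBalanced_of_exposed {d b : ℕ} (hb : 0 < b) {X : Finset (EuclideanSpace ℝ (Fin d))}
    {e : Fin b → EuclideanSpace ℝ (Fin d)} (he : LinearIndependent ℝ e)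
    (heX : ∀ j, e j ∈ X ∧ -e j ∈ X) {f : EuclideanSpace ℝ (Fin d) →ₗ[ℝ] ℝ}
    (hf : ∀ x ∈ X, 0 ≤ f x) (hker : ∀ x ∈ X, f x = 0 → x ∈ span ℝ (range e)) :
    IsBBalanced d b X := by
  set A := convexHull ℝ (X : Set (EuclideanSpace ℝ (Fin d)))
  have heA : ∀ j, e j ∈ A ∧ -e j ∈ A := fun j =>
    ⟨subset_convexHull ℝ _ (heX j).1, subset_convexHull ℝ _ (heX j).2⟩
  have hrank : Module.finrank ℝ (span ℝ (range e)) = b := by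
    rw [finrank_span_eq_card he, Fintype.card_fin]
  have hfA : ∀ x ∈ A, 0 ≤ f x := fun x hx =>
    convexHull_min hf (convex_halfSpace_ge f.isLinear 0) hx
  have h0 : (0 : EuclideanSpace ℝ (Fin d)) ∈ A ∩ LinearMap.ker f :=
    ⟨segment_subset_convexHull (heX ⟨0, hb⟩).1 (heX ⟨0, hb⟩).2
      (openSegment_subset_segment _ _ _ (zero_mem_openSegment_neg _)), map_zero f⟩
  have hext := isExtreme_inter_ker hfA
  refine ⟨⟨_, hext, h0, ?_⟩, fun F hF h0F => hrank ▸ finrank_mono (hF.span_le_vectorSpan h0F heA)⟩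
  rw [← hrank, le_antisymm _ (hext.span_le_vectorSpan h0 heA)]
  rw [vectorSpan_eq_span_of_zero_mem h0, span_le]
  exact convexHull_inter_ker_subset hf hker

def IsFarthestPointStep {E : Type*} [NormedAddCommGroup E] [InnerProductSpace ℝ E]
    (X : Finset E) (u v : E) : Prop :=
  ∃ χ ∈ X, (∀ x ∈ X, ⟪χ, u⟫ ≤ ⟪x, u⟫) ∧ v = u + χ

theorem Relation.ReflTransGen.exists_seq {α : Type*} {r : α → α → Prop} {a b : α}
    (hab : ReflTransGen r a b) (hb : ∃ u : ℕ → α, u 0 = b ∧ ∀ i, r (u i) (u (i + 1))) :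
    ∃ u : ℕ → α, u 0 = a ∧ (∀ i, r (u i) (u (i + 1))) ∧ ∃ n, u n = b := by
  induction hab using ReflTransGen.head_induction_on with
  | refl => obtain ⟨u, hu₀, hu⟩ := hb; exact ⟨u, hu₀, hu, 0, hu₀⟩
  | head hac _ ih =>
    obtain ⟨u, hu₀, hu, n, hn⟩ := ih
    refine ⟨fun | 0 => _ | i + 1 => u i, rfl, fun | 0 => ?_ | i + 1 => hu i, n + 1, hn⟩
    simpa [hu₀] using hac

theorem exists_seq_of_cycle {α : Type*} {r : α → α → Prop} {a b : α} (hab : r a b) (hba : r b a) :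
    ∃ u : ℕ → α, u 0 = a ∧ ∀ i, r (u i) (u (i + 1)) := by
  refine ⟨fun i => if Even i then a else b, by simp, fun i => ?_⟩
  by_cases hi : Even i <;> simp [hi, Nat.even_add_one, hab, hba]

theorem exists_lt_of_forall_add {P : ℝ → Prop} {L Δ : ℝ} (hΔ : 0 < Δ) (h0 : P 0)
    (hstep : ∀ z, 0 ≤ z → z ≤ L → P z → P (z + Δ)) : ∃ Z, L < Z ∧ P Z := by
  by_contra! hle
  have hP : ∀ n : ℕ, P (n * Δ) := by
    intro n
    induction n with
    | zero => simpa using h0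
    | succ n ih => simpa [add_mul] using hstep _ (by positivity) (not_lt.1 fun h => hle _ h ih) ih
  obtain ⟨n, hn⟩ := exists_nat_gt (L / Δ)
  exact hle _ ((div_lt_iff₀ hΔ).1 hn) (hP n)

theorem exists_nonneg_sq_add_sq_eq {t r : ℝ} (h : t ^ 2 ≤ r) : ∃ s, 0 ≤ s ∧ s ^ 2 + t ^ 2 = r :=
  ⟨√(r - t ^ 2), Real.sqrt_nonneg _, by rw [Real.sq_sqrt (by linarith)]; ring⟩

/-- In the `(x, y, z)` coordinates of `WitnessFrame.vec` the four points off the face are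
`A = (4/5, -3/5, 0)`, `B = (-4/5, g, ε)`, `A' = (4/5, p, q)`, `B' = (-4/5, -g', h)`. The
inequalities make them the farthest-point choices, in this order, from every height `z ∈ [0, L]`;
`g'_eq` makes the cycle return to `y = 0`. -/
structure WitnessParams (L : ℝ) where
  ε : ℝ
  g : ℝ
  p : ℝ
  q : ℝ
  g' : ℝ
  h : ℝ
  g_sq : g ^ 2 + ε ^ 2 = 9 / 25
  p_sq : p ^ 2 + q ^ 2 = 9 / 25
  g'_sq : g' ^ 2 + h ^ 2 = 9 / 25
  g'_eq : g' = g + p - 3 / 5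
  q_pos : 0 < q
  q_le_ε : q ≤ ε
  h_nonneg : 0 ≤ h
  half_le_g : 1 / 2 ≤ g
  half_le_g' : 1 / 2 ≤ g'
  g_le_p : g ≤ p
  ε_mul_le : ε * (L + 1) ≤ 1 / 20
  h_mul_le : h * (L + 1) ≤ 1 / 20
  q_mul_le : q * (L + 1) ≤ p * (3 / 5 - g)

namespace WitnessParams

theorem nonempty {L : ℝ} (hL : 0 ≤ L) : Nonempty (WitnessParams L) := by
  obtain ⟨ε, hε, hεL⟩ : ∃ ε : ℝ, 0 < ε ∧ ε * (L + 1) = 1 / 40 :=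
    ⟨1 / (40 * (L + 1)), by positivity, by field_simp⟩
  have hε1 : ε ≤ 1 / 40 := by nlinarith
  obtain ⟨g, hg0, g_sq⟩ := exists_nonneg_sq_add_sq_eq (t := ε) (r := 9 / 25) (by nlinarith)
  have half_le_g : 1 / 2 ≤ g := by nlinarith
  set δ := 3 / 5 - g
  have hδ : δ * (3 / 5 + g) = ε ^ 2 := by linear_combination -g_sq
  have hδ0 : 0 < δ := by nlinarith
  have hδε : δ ≤ ε ^ 2 := by nlinarith
  -- `q` is of order `ε³`: the step from `B` to `A'` needs `q z ≲ p δ` with `δ ≈ 5ε²/6`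
  set q := δ * ε
  have q_pos : 0 < q := by positivity
  have q_le_ε : q ≤ ε := by nlinarith
  obtain ⟨p, hp0, p_sq⟩ := exists_nonneg_sq_add_sq_eq (t := q) (r := 9 / 25) (by nlinarith)
  have g_le_p : g ≤ p := by nlinarith
  have hp : p ≤ 3 / 5 := by nlinarith
  set g' := g + p - 3 / 5
  have half_le_g' : 1 / 2 ≤ g' := by nlinarith
  obtain ⟨h, h_nonneg, hg'_sq⟩ := exists_nonneg_sq_add_sq_eq (t := g') (r := 9 / 25) (by nlinarith)
  have h_le : h ≤ ε + q := by
    have : h ^ 2 = q ^ 2 + δ * (2 * p - δ) := by linear_combination hg'_sq - p_sq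
    nlinarith
  exact ⟨{ ε, g, p, q, g', h, g_sq, p_sq, g'_sq := by linarith, g'_eq := rfl, q_pos, q_le_ε,
           h_nonneg, half_le_g, half_le_g', g_le_p, ε_mul_le := by linarith,
           h_mul_le := by nlinarith, q_mul_le := by nlinarith }⟩

variable {L : ℝ} (P : WitnessParams L)

theorem ε_pos : 0 < P.ε := P.q_pos.trans_le P.q_le_ε

theorem p_le : P.p ≤ 3 / 5 := by nlinarith [P.p_sq, P.q_pos]

theorem g_le : P.g ≤ 3 / 5 := P.g_le_p.trans P.p_le

theorem g'_le : P.g' ≤ 3 / 5 := by linarith [P.g'_eq, P.g_le, P.p_le]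

end WitnessParams

/-- The face axis `face i₀` doubles as the `x`-axis of `vec`; `y` and `z` are off the face. -/
structure WitnessFrame (d b : ℕ) where
  face : Fin b ↪ Fin d
  i₀ : Fin b
  y : Fin d
  z : Fin d
  y_ne_z : y ≠ z
  face_ne_y : ∀ j, face j ≠ y
  face_ne_z : ∀ j, face j ≠ z

namespace WitnessFrame

open EuclideanSpace Finset

def standard {d b : ℕ} (hb : 0 < b) (hbd : b + 2 ≤ d) : WitnessFrame d b where
  face := Fin.castLEEmb (by omega)
  i₀ := ⟨0, hb⟩
  y := ⟨b, by omega⟩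
  z := ⟨b + 1, by omega⟩
  y_ne_z := by simp
  face_ne_y j := by simp [Fin.ext_iff, j.isLt.ne]
  face_ne_z j := by simp [Fin.ext_iff]; omega

variable {d b : ℕ} (F : WitnessFrame d b)

noncomputable def vec (a y z : ℝ) : EuclideanSpace ℝ (Fin d) :=
  single (F.face F.i₀) a + single F.y y + single F.z z

theorem inner_single_vec (j : Fin b) (t a y z : ℝ) :
    ⟪single (F.face j) t, F.vec a y z⟫ = if j = F.i₀ then t * a else 0 := by
  simp [vec, inner_single_left, F.face_ne_y, F.face_ne_z]

theorem inner_vec_vec (a y z a' y' z' : ℝ) :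
    ⟪F.vec a y z, F.vec a' y' z'⟫ = a * a' + y * y' + z * z' := by
  simp [vec, inner_add_left, inner_single_left, F.face_ne_y, F.face_ne_z, F.y_ne_z,
    (F.face_ne_y _).symm, (F.face_ne_z _).symm, F.y_ne_z.symm]

theorem vec_add (a y z a' y' z' : ℝ) :
    F.vec a y z + F.vec a' y' z' = F.vec (a + a') (y + y') (z + z') := by
  simp only [vec, PiLp.single_add]; abel

theorem vec_zero : F.vec 0 0 0 = 0 := by
  ext i; simp [vec]

theorem vec_zero_zero (a : ℝ) : F.vec a 0 0 = single (F.face F.i₀) a := by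
  ext i; simp [vec]

theorem norm_vec (a y z : ℝ) : ‖F.vec a y z‖ = √(a ^ 2 + y ^ 2 + z ^ 2) := by
  rw [norm_eq_sqrt_real_inner, inner_vec_vec]; ring_nf

variable {L : ℝ} (P : WitnessParams L)

noncomputable def witness : Finset (EuclideanSpace ℝ (Fin d)) :=
  (univ.image fun j => single (F.face j) 1) ∪ (univ.image fun j => -single (F.face j) 1) ∪
    {F.vec (4 / 5) (-3 / 5) 0, F.vec (4 / 5) P.p P.q, F.vec (-4 / 5) P.g P.ε,
      F.vec (-4 / 5) (-P.g') P.h}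

theorem mem_witness {x : EuclideanSpace ℝ (Fin d)} : x ∈ F.witness P ↔
    x = F.vec (4 / 5) (-3 / 5) 0 ∨ x = F.vec (4 / 5) P.p P.q ∨ x = F.vec (-4 / 5) P.g P.ε ∨
      x = F.vec (-4 / 5) (-P.g') P.h ∨ (∃ j, single (F.face j) 1 = x) ∨
      ∃ j, -single (F.face j) 1 = x := by
  simp [witness]

theorem single_mem_witness (j : Fin b) :
    single (F.face j) 1 ∈ F.witness P ∧ -single (F.face j) 1 ∈ F.witness P := by
  simp [witness]

theorem vec_mem_witness : F.vec (4 / 5) (-3 / 5) 0 ∈ F.witness P ∧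
    F.vec (-4 / 5) P.g P.ε ∈ F.witness P ∧ F.vec (4 / 5) P.p P.q ∈ F.witness P ∧
    F.vec (-4 / 5) (-P.g') P.h ∈ F.witness P := by
  simp [witness]

theorem norm_eq_one_of_mem_witness : ∀ x ∈ F.witness P, ‖x‖ = 1 := by
  have hunit : ∀ a y z : ℝ, a ^ 2 + y ^ 2 + z ^ 2 = 1 → ‖F.vec a y z‖ = 1 := fun a y z h => by
    rw [norm_vec, h, Real.sqrt_one]
  intro x hx
  rcases (F.mem_witness P).1 hx with rfl | rfl | rfl | rfl | ⟨j, rfl⟩ | ⟨j, rfl⟩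
  · exact hunit _ _ _ (by norm_num)
  · exact hunit _ _ _ (by linear_combination P.p_sq)
  · exact hunit _ _ _ (by linear_combination P.g_sq)
  · exact hunit _ _ _ (by linear_combination P.g'_sq)
  · simp
  · simp

noncomputable def tilt : EuclideanSpace ℝ (Fin d) →ₗ[ℝ] ℝ :=
  innerₗ _ (F.vec 0 (-P.q) 1)

theorem tilt_apply (x : EuclideanSpace ℝ (Fin d)) : F.tilt P x = ⟪x, F.vec 0 (-P.q) 1⟫ :=
  real_inner_comm x _

theorem isBBalanced_witness : IsBBalanced d b (F.witness P) := by
  have htilt : ∀ x ∈ F.witness P, (x ∈ span ℝ (range fun j => single (F.face j) (1 : ℝ)) ∧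
      F.tilt P x = 0) ∨ 0 < F.tilt P x := by
    intro x hx
    rcases (F.mem_witness P).1 hx with rfl | rfl | rfl | rfl | ⟨j, rfl⟩ | ⟨j, rfl⟩
    all_goals simp only [tilt_apply, inner_vec_vec, inner_neg_left, inner_single_vec]
    · right; nlinarith [P.q_pos]
    · right; nlinarith [P.q_pos, P.p_le]
    · right; nlinarith [P.q_pos, P.q_le_ε, P.g_le]
    · right; nlinarith [P.q_pos, P.half_le_g', P.h_nonneg]
    · left; exact ⟨subset_span ⟨j, rfl⟩, by simp⟩
    · left; exact ⟨neg_mem (subset_span ⟨j, rfl⟩), by simp⟩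
  refine isBBalanced_of_exposed F.i₀.pos
    ((orthonormal_single (𝕜 := ℝ)).linearIndependent.comp _ F.face.injective)
    (F.single_mem_witness P) (f := F.tilt P) (fun x hx => ?_) (fun x hx hx0 => ?_)
  · rcases htilt x hx with h | h
    · exact h.2.ge
    · exact h.le
  · rcases htilt x hx with h | h
    · exact h.1
    · exact absurd hx0 h.ne'

theorem isFarthestPointStep_vec {a y z a' y' z' : ℝ} {v : EuclideanSpace ℝ (Fin d)}
    (hχ : F.vec a' y' z' ∈ F.witness P) (hface : a' * a + y' * y + z' * z ≤ -|a|)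
    (hA : a' * a + y' * y + z' * z ≤ 4 / 5 * a - 3 / 5 * y)
    (hA' : a' * a + y' * y + z' * z ≤ 4 / 5 * a + P.p * y + P.q * z)
    (hB : a' * a + y' * y + z' * z ≤ -4 / 5 * a + P.g * y + P.ε * z)
    (hB' : a' * a + y' * y + z' * z ≤ -4 / 5 * a - P.g' * y + P.h * z)
    (hv : F.vec (a + a') (y + y') (z + z') = v) :
    IsFarthestPointStep (F.witness P) (F.vec a y z) v := by
  refine ⟨_, hχ, fun x hx => ?_, by rw [← hv, vec_add]⟩
  rw [inner_vec_vec]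
  rcases (F.mem_witness P).1 hx with rfl | rfl | rfl | rfl | ⟨j, rfl⟩ | ⟨j, rfl⟩
  all_goals simp only [inner_vec_vec, inner_neg_left, inner_single_vec]
  · linarith
  · linarith
  · linarith
  · linarith
  · split_ifs <;> linarith [neg_abs_le a, abs_nonneg a]
  · split_ifs <;> linarith [le_abs_self a, abs_nonneg a]

theorem reflTransGen_period {z : ℝ} (hz : 0 ≤ z) (hzL : z ≤ L) :
    ReflTransGen (IsFarthestPointStep (F.witness P)) (F.vec 0 0 z)
      (F.vec 0 0 (z + (P.ε + P.q + P.h))) := by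
  obtain ⟨hA, hB, hA', hB'⟩ := F.vec_mem_witness P
  have := P.ε_pos; have := P.q_pos; have := P.h_nonneg; have := P.half_le_g
  have := P.half_le_g'; have := P.p_le; have := P.g_le; have := P.g'_le; have := P.q_le_ε
  have := P.ε_mul_le; have := P.h_mul_le; have := P.q_mul_le; have := P.g_le_p
  have hε1 : P.ε ≤ 1 / 20 := by nlinarith
  have hεz : P.ε * z ≤ 1 / 20 := by nlinarith
  have hqz : P.q * (z + P.ε) ≤ P.p * (3 / 5 - P.g) := by
    nlinarith [mul_le_mul_of_nonneg_left (show z + P.ε ≤ L + 1 by linarith) P.q_pos.le]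
  have hhz : P.h * (z + P.ε + P.q) ≤ 1 / 20 := by
    nlinarith [mul_le_mul_of_nonneg_left (show z + P.ε + P.q ≤ L + 1 by linarith) P.h_nonneg]
  have s₁ : IsFarthestPointStep (F.witness P) (F.vec 0 0 z) (F.vec (4 / 5) (-3 / 5) z) :=
    F.isFarthestPointStep_vec P hA (by norm_num) (by norm_num)
      (by nlinarith) (by nlinarith) (by nlinarith) (by congr 1 <;> ring)
  have s₂ : IsFarthestPointStep (F.witness P) (F.vec (4 / 5) (-3 / 5) z)
      (F.vec 0 (P.g - 3 / 5) (z + P.ε)) :=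
    F.isFarthestPointStep_vec P hB (by norm_num; nlinarith) (by nlinarith)
      (by nlinarith) (by nlinarith) (by nlinarith) (by congr 1 <;> ring)
  have s₃ : IsFarthestPointStep (F.witness P) (F.vec 0 (P.g - 3 / 5) (z + P.ε))
      (F.vec (4 / 5) P.g' (z + P.ε + P.q)) :=
    F.isFarthestPointStep_vec P hA' (by norm_num; nlinarith) (by nlinarith)
      (by nlinarith) (by nlinarith) (by nlinarith) (by rw [P.g'_eq]; congr 1 <;> ring)
  have s₄ : IsFarthestPointStep (F.witness P) (F.vec (4 / 5) P.g' (z + P.ε + P.q))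
      (F.vec 0 0 (z + (P.ε + P.q + P.h))) :=
    F.isFarthestPointStep_vec P hB' (by norm_num; nlinarith) (by nlinarith)
      (by nlinarith) (by nlinarith) (by nlinarith) (by congr 1 <;> ring)
  exact .head s₁ (.head s₂ (.head s₃ (.single s₄)))

theorem isFarthestPointStep_cycle {Z : ℝ} (hZ : 0 ≤ Z) :
    IsFarthestPointStep (F.witness P) (F.vec 0 0 Z) (F.vec 1 0 Z) ∧
      IsFarthestPointStep (F.witness P) (F.vec 1 0 Z) (F.vec 0 0 Z) := by
  have hε := P.ε_pos; have hq := P.q_pos; have hh := P.h_nonneg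
  have hex : F.vec 1 0 0 ∈ F.witness P ∧ F.vec (-1) 0 0 ∈ F.witness P := by
    simpa [vec_zero_zero, PiLp.single_neg] using F.single_mem_witness P F.i₀
  constructor
  · exact F.isFarthestPointStep_vec P hex.1 (by norm_num) (by norm_num) (by nlinarith)
      (by nlinarith) (by nlinarith) (by congr 1 <;> ring)
  · exact F.isFarthestPointStep_vec P hex.2 (by norm_num) (by norm_num) (by nlinarith)
      (by nlinarith) (by nlinarith) (by congr 1 <;> ring)

theorem exists_reflTransGen : ∃ Z, L < Z ∧
    ReflTransGen (IsFarthestPointStep (F.witness P)) 0 (F.vec 0 0 Z) := by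
  refine exists_lt_of_forall_add (P := fun Z => ReflTransGen _ 0 (F.vec 0 0 Z))
    (Δ := P.ε + P.q + P.h) (by linarith [P.ε_pos, P.q_pos, P.h_nonneg]) ?_
    fun z hz hzL hpath => hpath.trans (F.reflTransGen_period P hz hzL)
  rw [vec_zero]

end WitnessFrame

theorem stmt14_general (M : ℝ) (d b : ℕ) (hb1 : 1 ≤ b) (hb2 : b ≤ d - 2) :
    ∃ X : Finset (EuclideanSpace ℝ (Fin d)),
      (∀ x ∈ X, ‖x‖ = 1) ∧
      IsBBalanced d b X ∧
      ∃ u : ℕ → EuclideanSpace ℝ (Fin d),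
        u 0 = 0 ∧
        (∀ i, ∃ χ ∈ X, (∀ x ∈ X, ⟪χ, u i⟫ ≤ ⟪x, u i⟫) ∧ u (i + 1) = u i + χ) ∧
        ∃ i, Real.sqrt M ≤ ‖u i‖ := by
  let F := WitnessFrame.standard hb1 (by omega : b + 2 ≤ d)
  obtain ⟨P⟩ := WitnessParams.nonempty (Real.sqrt_nonneg M)
  obtain ⟨Z, hMZ, hpath⟩ := F.exists_reflTransGen P
  have hZ : 0 ≤ Z := (Real.sqrt_nonneg M).trans hMZ.le
  have ⟨hup, hdown⟩ := F.isFarthestPointStep_cycle P hZ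
  obtain ⟨u, hu₀, hu, n, hn⟩ := hpath.exists_seq (exists_seq_of_cycle hup hdown)
  refine ⟨F.witness P, F.norm_eq_one_of_mem_witness P, F.isBBalanced_witness P, u, hu₀, hu, n, ?_⟩
  rw [hn, WitnessFrame.norm_vec]
  simpa [Real.sqrt_sq hZ] using hMZ.le

/-- For every `M > 0`, `d ≥ 3` and `1 ≤ b ≤ d - 2` there is a finite `b`-balanced
set `X` of unit vectors in `ℝ^d` admitting a valid farthest-point iteration reaching length
`≥ √M`; hence `u**(d, b) = ∞`. -/
theorem stmt14 (M : ℝ) (hM : 0 < M) (d b : ℕ) (hd : 3 ≤ d) (hb1 : 1 ≤ b) (hb2 : b ≤ d - 2) :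
    ∃ X : Finset (EuclideanSpace ℝ (Fin d)),
      (∀ x ∈ X, ‖x‖ = 1) ∧
      IsBBalanced d b X ∧
      ∃ u : ℕ → EuclideanSpace ℝ (Fin d),
        u 0 = 0 ∧
        (∀ i, ∃ χ ∈ X, (∀ x ∈ X, ⟪χ, u i⟫ ≤ ⟪x, u i⟫) ∧ u (i + 1) = u i + χ) ∧
        ∃ i, Real.sqrt M ≤ ‖u i‖ :=
  stmt14_general M d b hb1 hb2
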